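/- Let T be a spherically homogeneous rooted tree, let G ≤ Aut(T) be a weakly branch group, and let H ≤ G be a quasi-prodense subgroup of G. Then for every vertex v of T, the subgroup H_v = φ_v(St_H(v)) is a quasi-prodense subgroup of G_v = φ_v(St_G(v)). -/

import Mathlib

open scoped Pointwise

/-! ## Spherically homogeneous rooted trees -/

/-- A vertex of the spherically homogeneous rooted tree over the shifted sequence of
alphabets `i ↦ A (i + k)`: a finite word whose `j`-th letter belongs to `A (j + k)`. -/
def Vtx (A : ℕ → Type*) (k : ℕ) : Type _ :=
  {l : List (Σ i, A i) // ∀ j (h : j < l.length), (l[j]'h).1 = j + k}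

namespace Vtx

variable {A : ℕ → Type*}

/-- The length of a vertex (the distance to the root). -/
def len {k : ℕ} (v : Vtx A k) : ℕ := v.1.length

/-- The prefix relation on vertices. -/
def Pre {k : ℕ} (v w : Vtx A k) : Prop := v.1 <+: w.1

/-- The `n`-th level of the tree: all vertices of length `n`. -/
def level (A : ℕ → Type*) (k : ℕ) (n : ℕ) : Set (Vtx A k) := {v | v.len = n}

/-- Concatenation of a vertex of the tree with a word over the shifted alphabets. -/
def cat (v : Vtx A 0) (w : Vtx A v.len) : Vtx A 0 :=
  ⟨v.1 ++ w.1, by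
    intro j h
    by_cases hj : j < v.1.length
    · rw [List.getElem_append_left hj]
      exact v.2 j hj
    · push_neg at hj
      rw [List.getElem_append_right hj]
      have h2 : j - v.1.length < w.1.length := by
        have h3 := h
        simp only [List.length_append] at h3
        omega
      exact (w.2 (j - v.1.length) h2).trans
        (by show j - v.1.length + v.1.length = j + 0; omega)⟩

/-- Deleting a prefix of length `n` from a vertex. -/
def dropPre (n : ℕ) (u : Vtx A 0) : Vtx A n :=
  ⟨u.1.drop n, by
    intro j h
    have h' : n + j < u.1.length := by
      simp only [List.length_drop] at h
      omega
    rw [List.getElem_drop]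
    exact (u.2 (n + j) h').trans (by omega)⟩

end Vtx

/-- The full automorphism group of the rooted tree `T_k`:
bijections of the vertex set preserving word length and the prefix relation. -/
def treeAut (A : ℕ → Type*) (k : ℕ) : Subgroup (Equiv.Perm (Vtx A k)) where
  carrier := {f | (∀ v, (f v).len = v.len) ∧ ∀ v w, Vtx.Pre (f v) (f w) ↔ Vtx.Pre v w}
  one_mem' := ⟨fun _ => rfl, fun _ _ => Iff.rfl⟩
  mul_mem' := by
    rintro f g ⟨hf1, hf2⟩ ⟨hg1, hg2⟩
    constructor
    · intro v
      have : (f * g) v = f (g v) := rfl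
      rw [this]
      exact (hf1 (g v)).trans (hg1 v)
    · intro v w
      have e1 : (f * g) v = f (g v) := rfl
      have e2 : (f * g) w = f (g w) := rfl
      rw [e1, e2]
      exact (hf2 (g v) (g w)).trans (hg2 v w)
  inv_mem' := by
    rintro f ⟨hf1, hf2⟩
    constructor
    · intro v
      conv_rhs => rw [← (show f (f⁻¹ v) = v from Equiv.apply_symm_apply f v)]
      exact (hf1 _).symm
    · intro v w
      conv_rhs => rw [← (show f (f⁻¹ v) = v from Equiv.apply_symm_apply f v),
        ← (show f (f⁻¹ w) = w from Equiv.apply_symm_apply f w)]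
      exact (hf2 _ _).symm

variable {A : ℕ → Type*}

/-- The stabiliser `St_H(v)` of a vertex `v` in a subgroup `H ≤ Perm`. -/
def vstab {k : ℕ} (H : Subgroup (Equiv.Perm (Vtx A k))) (v : Vtx A k) :
    Subgroup (Equiv.Perm (Vtx A k)) where
  carrier := {g | g ∈ H ∧ g v = v}
  one_mem' := ⟨H.one_mem, rfl⟩
  mul_mem' := by
    rintro a b ⟨ha, ha'⟩ ⟨hb, hb'⟩
    refine ⟨H.mul_mem ha hb, ?_⟩
    have : (a * b) v = a (b v) := rfl
    rw [this, hb', ha']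
  inv_mem' := by
    rintro a ⟨ha, ha'⟩
    refine ⟨H.inv_mem ha, ?_⟩
    conv_lhs => rw [← ha']
    exact Equiv.symm_apply_apply a v

/-- The stabiliser `St_H(n)` of the `n`-th level. -/
def levStab {k : ℕ} (H : Subgroup (Equiv.Perm (Vtx A k))) (n : ℕ) :
    Subgroup (Equiv.Perm (Vtx A k)) where
  carrier := {g | g ∈ H ∧ ∀ v : Vtx A k, v.len = n → g v = v}
  one_mem' := ⟨H.one_mem, fun _ _ => rfl⟩
  mul_mem' := by
    rintro a b ⟨ha, ha'⟩ ⟨hb, hb'⟩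
    refine ⟨H.mul_mem ha hb, fun v hv => ?_⟩
    have : (a * b) v = a (b v) := rfl
    rw [this, hb' v hv, ha' v hv]
  inv_mem' := by
    rintro a ⟨ha, ha'⟩
    refine ⟨H.inv_mem ha, fun v hv => ?_⟩
    conv_lhs => rw [← ha' v hv]
    exact Equiv.symm_apply_apply a v

/-- The rigid stabiliser `rist_H(v)`: elements of `H` fixing every vertex that does not
have `v` as a prefix. -/
def rist {k : ℕ} (H : Subgroup (Equiv.Perm (Vtx A k))) (v : Vtx A k) :
    Subgroup (Equiv.Perm (Vtx A k)) where
  carrier := {g | g ∈ H ∧ ∀ w : Vtx A k, ¬ Vtx.Pre v w → g w = w}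
  one_mem' := ⟨H.one_mem, fun _ _ => rfl⟩
  mul_mem' := by
    rintro a b ⟨ha, ha'⟩ ⟨hb, hb'⟩
    refine ⟨H.mul_mem ha hb, fun w hw => ?_⟩
    have : (a * b) w = a (b w) := rfl
    rw [this, hb' w hw, ha' w hw]
  inv_mem' := by
    rintro a ⟨ha, ha'⟩
    refine ⟨H.inv_mem ha, fun w hw => ?_⟩
    conv_lhs => rw [← ha' w hw]
    exact Equiv.symm_apply_apply a w

/-- The rigid level stabiliser `rist_H(n)`: the subgroup generated by the rigid
stabilisers of the vertices on the `n`-th level. -/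
def ristLev {k : ℕ} (H : Subgroup (Equiv.Perm (Vtx A k))) (n : ℕ) :
    Subgroup (Equiv.Perm (Vtx A k)) :=
  ⨆ v ∈ {v : Vtx A k | v.len = n}, rist H v

/-- `G` acts spherically transitively: transitively on every level of the tree. -/
def SphTrans {k : ℕ} (G : Subgroup (Equiv.Perm (Vtx A k))) : Prop :=
  ∀ v w : Vtx A k, v.len = w.len → ∃ g ∈ G, g v = w

/-- `G ≤ Aut(T_k)` is a branch group. -/
structure IsBranch {k : ℕ} (G : Subgroup (Equiv.Perm (Vtx A k))) : Prop where
  le_aut : G ≤ treeAut A k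
  trans : SphTrans G
  rist_fi : ∀ n : ℕ, (ristLev G n).relIndex G ≠ 0

/-- `G ≤ Aut(T_k)` is a weakly branch group. -/
structure IsWeaklyBranch {k : ℕ} (G : Subgroup (Equiv.Perm (Vtx A k))) : Prop where
  le_aut : G ≤ treeAut A k
  trans : SphTrans G
  rist_nt : ∀ n : ℕ, ristLev G n ≠ ⊥

/-! ## Sections -/

namespace Vtx

theorem dropPre_cat (v : Vtx A 0) (w : Vtx A v.len) : dropPre v.len (cat v w) = w := by
  apply Subtype.ext
  show (v.1 ++ w.1).drop v.1.length = w.1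
  exact List.drop_left

theorem pre_cat (v : Vtx A 0) (w : Vtx A v.len) : Pre v (cat v w) := ⟨w.1, rfl⟩

theorem cat_dropPre {v u : Vtx A 0} (h : Pre v u) : cat v (dropPre v.len u) = u := by
  apply Subtype.ext
  show v.1 ++ u.1.drop v.1.length = u.1
  obtain ⟨t, ht⟩ := h
  rw [← ht, List.drop_left]

end Vtx

/-- The section map `φ_v` at the level of plain functions. -/
def secFun (v : Vtx A 0) (f : Equiv.Perm (Vtx A 0)) : Vtx A v.len → Vtx A v.len :=
  fun w => Vtx.dropPre v.len (f (Vtx.cat v w))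

theorem secFun_key {v : Vtx A 0} {f : Equiv.Perm (Vtx A 0)}
    (hf : f ∈ vstab (treeAut A 0) v) (w : Vtx A v.len) :
    Vtx.cat v (secFun v f w) = f (Vtx.cat v w) := by
  obtain ⟨⟨hlen, hpre⟩, hfix⟩ := hf
  apply Vtx.cat_dropPre
  have := (hpre v (Vtx.cat v w))
  rw [hfix] at this
  exact this.mpr (Vtx.pre_cat v w)

theorem secFun_mul {v : Vtx A 0} {f g : Equiv.Perm (Vtx A 0)}
    (hf : f ∈ vstab (treeAut A 0) v) (hg : g ∈ vstab (treeAut A 0) v) :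
    secFun v (f * g) = secFun v f ∘ secFun v g := by
  funext w
  show Vtx.dropPre v.len ((f * g) (Vtx.cat v w)) = Vtx.dropPre v.len (f (Vtx.cat v (secFun v g w)))
  rw [secFun_key hg w]
  rfl

theorem secFun_one (v : Vtx A 0) : secFun v (1 : Equiv.Perm (Vtx A 0)) = id := by
  funext w
  show Vtx.dropPre v.len ((1 : Equiv.Perm (Vtx A 0)) (Vtx.cat v w)) = w
  rw [Equiv.Perm.one_apply]
  exact Vtx.dropPre_cat v w

theorem secFun_bij {v : Vtx A 0} {f : Equiv.Perm (Vtx A 0)}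
    (hf : f ∈ vstab (treeAut A 0) v) : Function.Bijective (secFun v f) := by
  rw [Function.bijective_iff_has_inverse]
  refine ⟨secFun v f⁻¹, fun w => ?_, fun w => ?_⟩
  · have h1 := congrFun (secFun_mul (inv_mem hf) hf) w
    rw [inv_mul_cancel, secFun_one] at h1
    exact h1.symm
  · have h1 := congrFun (secFun_mul hf (inv_mem hf)) w
    rw [mul_inv_cancel, secFun_one] at h1
    exact h1.symm

open Classical in
noncomputable def secPerm (v : Vtx A 0) (f : Equiv.Perm (Vtx A 0)) :
    Equiv.Perm (Vtx A v.len) :=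
  if h : Function.Bijective (secFun v f) then Equiv.ofBijective _ h else 1

theorem secPerm_coe {v : Vtx A 0} {f : Equiv.Perm (Vtx A 0)}
    (hf : f ∈ vstab (treeAut A 0) v) : ⇑(secPerm v f) = secFun v f := by
  unfold secPerm
  rw [dif_pos (secFun_bij hf)]
  rfl

/-- The section homomorphism `φ_v : St_{Aut(T)}(v) → Perm(T_{|v|})`. -/
noncomputable def phiHom (v : Vtx A 0) :
    ↥(vstab (treeAut A 0) v) →* Equiv.Perm (Vtx A v.len) where
  toFun f := secPerm v f.1
  map_one' := by
    apply Equiv.ext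
    intro w
    show secPerm v (1 : Equiv.Perm (Vtx A 0)) w = (1 : Equiv.Perm (Vtx A v.len)) w
    rw [secPerm_coe (one_mem (vstab (treeAut A 0) v)), secFun_one]
    rfl
  map_mul' := by
    intro f g
    apply Equiv.ext
    intro w
    show secPerm v (f.1 * g.1) w = (secPerm v f.1 * secPerm v g.1) w
    have e : (secPerm v f.1 * secPerm v g.1) w = secPerm v f.1 (secPerm v g.1 w) := rfl
    rw [e, secPerm_coe (mul_mem f.2 g.2), secPerm_coe f.2, secPerm_coe g.2,
      secFun_mul f.2 g.2]
    rfl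

/-- The image `φ_v(St_H(v)) ≤ Perm(T_{|v|})` of the stabiliser of `v` in `H` under the
section homomorphism at `v`; for `H ≤ G ≤ Aut(T)` this is the subgroup written `H_v`. -/
noncomputable def secSub (v : Vtx A 0) (H : Subgroup (Equiv.Perm (Vtx A 0))) :
    Subgroup (Equiv.Perm (Vtx A v.len)) :=
  Subgroup.map (phiHom v) ((vstab H v).subgroupOf (vstab (treeAut A 0) v))

/-- A subgroup `H ≤ G` has finite bi-index if the set of double cosets
`{HgH : g ∈ G}` is finite. -/
def FiniteBiIndex {G : Type*} [Group G] (H : Subgroup G) : Prop :=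
  {S : Set G | ∃ g : G, S = (H : Set G) * {g} * (H : Set G)}.Finite

/-- The set of double cosets of a subgroup `H` of a group `M` with representatives in a
subgroup `G` of `M`; for `H ≤ G` this is the set of double cosets `H\G/H`. -/
def doubleCosets {M : Type*} [Group M] (G H : Subgroup M) : Set (Set M) :=
  {S : Set M | ∃ g ∈ G, S = (H : Set M) * {g} * (H : Set M)}

/-- The pro-normal closure of a subgroup `H ≤ G`: the intersection of the subsets `HN`,
over all nontrivial normal subgroups `N` of `G`. -/
def pronormalClosure {G : Type*} [Group G] (H : Subgroup G) : Subgroup G where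
  carrier := ⋂ N ∈ {N : Subgroup G | N.Normal ∧ N ≠ ⊥}, (H : Set G) * (N : Set G)
  one_mem' := by
    simp only [Set.mem_iInter]
    rintro N ⟨hN, -⟩
    exact ⟨1, H.one_mem, 1, N.one_mem, mul_one 1⟩
  mul_mem' := by
    intro a b ha hb
    simp only [Set.mem_iInter] at ha hb ⊢
    rintro N hN
    obtain ⟨h₁, hh₁, n₁, hn₁, rfl⟩ := ha N hN
    obtain ⟨h₂, hh₂, n₂, hn₂, rfl⟩ := hb N hN
    refine ⟨h₁ * h₂, H.mul_mem hh₁ hh₂, (h₂⁻¹ * n₁ * h₂) * n₂, ?_, by group⟩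
    refine N.mul_mem ?_ hn₂
    have := hN.1.conj_mem n₁ hn₁ h₂⁻¹
    simpa using this
  inv_mem' := by
    intro a ha
    simp only [Set.mem_iInter] at ha ⊢
    rintro N hN
    obtain ⟨h, hh, n, hn, rfl⟩ := ha N hN
    refine ⟨h⁻¹, H.inv_mem hh, h * n⁻¹ * h⁻¹, hN.1.conj_mem n⁻¹ (N.inv_mem hn) h, by group⟩

/-- A subgroup `H ≤ G` is quasi-prodense if its pro-normal closure has finite index. -/
def QuasiProdense {G : Type*} [Group G] (H : Subgroup G) : Prop :=
  (pronormalClosure H).index ≠ 0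

/-- `K` is a normal subgroup of the subgroup `H` (both subgroups of an ambient group). -/
def NormalIn {M : Type*} [Group M] (H K : Subgroup M) : Prop :=
  K ≤ H ∧ ∀ h ∈ H, ∀ k ∈ K, h * k * h⁻¹ ∈ K

/-- `K` is a subnormal subgroup of the subgroup `H`. -/
def SubnormalIn {M : Type*} [Group M] (H K : Subgroup M) : Prop :=
  ∃ (m : ℕ) (c : ℕ → Subgroup M), c 0 = K ∧ c m = H ∧ ∀ i < m, NormalIn (c (i + 1)) (c i)

/-- The iterated derived subgroups of a subgroup. -/
def iterDerived {M : Type*} [Group M] (H : Subgroup M) : ℕ → Subgroup M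
  | 0 => H
  | (k + 1) => ⁅iterDerived H k, iterDerived H k⁆

/-!
Write `p : St_G(v) → G_v` for the section map. Every nontrivial normal subgroup `N'` of `G_v`
contains `p c` for some nontrivial `c ∈ rist_G(v)`: if `x ∈ N'` moves a vertex `u`, choose
non-commuting `r, s ∈ rist_G(vu)`; the conjugate of `p r` by `x` lives below `x u ≠ u`, so the
double commutator `⁅⁅x, p r⁆, p s⁆ ∈ N'` equals `p ⁅r⁻¹, s⁆`. The `G`-conjugates of such `c` still
fix `v` and have sections in `N'` (a conjugate moved off `v` has trivial section), hence generate a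
nontrivial normal subgroup `N` of `G` with `p N ≤ N'`. Writing an element of the pro-normal closure
of `H` that fixes `v` as `h n` with `h ∈ H`, `n ∈ N` shows that `p` maps the finite-index subgroup
`St_G(v) ∩ H̄` into the pro-normal closure of `H_v`, which therefore has finite index.
-/

open scoped commutatorElement

theorem commutatorElement_commutatorElement_eq {Γ : Type*} [Group Γ] {x r s : Γ}
    (hr : Commute (x * r * x⁻¹) r) (hs : Commute (x * r * x⁻¹) s) :
    ⁅⁅x, r⁆, s⁆ = ⁅r⁻¹, s⁆ := by
  have hc : Commute (x * r * x⁻¹) (r⁻¹ * s * r) := (hr.inv_right.mul_right hs).mul_right hr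
  simp only [commutatorElement_def, inv_inv]
  calc x * r * x⁻¹ * r⁻¹ * s * (x * r * x⁻¹ * r⁻¹)⁻¹ * s⁻¹
      = x * r * x⁻¹ * (r⁻¹ * s * r) * (x * r * x⁻¹)⁻¹ * s⁻¹ := by group
    _ = r⁻¹ * s * r * s⁻¹ := by rw [hc.eq]; group

theorem Subgroup.Normal.commutatorElement_mem {Γ : Type*} [Group Γ] {N : Subgroup Γ}
    (hN : N.Normal) {x : Γ} (hx : x ∈ N) (y : Γ) : ⁅x, y⁆ ∈ N :=
  Subgroup.commutator_le_left N ⊤ (Subgroup.commutator_mem_commutator hx (Subgroup.mem_top y))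

section Pronormal

variable {Γ Q : Type*} [Group Γ] [Group Q]

theorem mem_pronormalClosure {K : Subgroup Γ} {x : Γ} :
    x ∈ pronormalClosure K ↔
      ∀ N : Subgroup Γ, N.Normal → N ≠ ⊥ → x ∈ (K : Set Γ) * (N : Set Γ) := by
  change x ∈ ⋂ N ∈ {N : Subgroup Γ | N.Normal ∧ N ≠ ⊥}, (K : Set Γ) * (N : Set Γ) ↔ _
  simp only [Set.mem_iInter, Set.mem_ofPred_eq, and_imp]

theorem pronormalClosure_mono {K L : Subgroup Γ} (h : K ≤ L) :
    pronormalClosure K ≤ pronormalClosure L := fun _ hx =>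
  mem_pronormalClosure.2 fun N hN hN' =>
    Set.mul_subset_mul_right (s₁ := (K : Set Γ)) h (mem_pronormalClosure.1 hx N hN hN')

theorem QuasiProdense.mono {K L : Subgroup Γ} (h : K ≤ L) (hK : QuasiProdense K) :
    QuasiProdense L :=
  ne_zero_of_dvd_ne_zero hK (Subgroup.index_dvd_of_le (pronormalClosure_mono h))

theorem map_pronormalClosure_subgroupOf_le {S : Subgroup Γ} {p : S →* Q}
    (hp : ∀ N' : Subgroup Q, N'.Normal → N' ≠ ⊥ →
      ∃ N : Subgroup Γ, N.Normal ∧ N ≠ ⊥ ∧ N ≤ (N'.comap p).map S.subtype)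
    (H : Subgroup Γ) :
    ((pronormalClosure H).subgroupOf S).map p ≤ pronormalClosure ((H.subgroupOf S).map p) := by
  rintro _ ⟨g, hg, rfl⟩
  refine mem_pronormalClosure.2 fun N' hN' hN'bot => ?_
  obtain ⟨N, hN, hNbot, hNS⟩ := hp N' hN' hN'bot
  obtain ⟨h, hh, n, hn, hhn⟩ := mem_pronormalClosure.1 (Subgroup.mem_subgroupOf.1 hg) N hN hNbot
  obtain ⟨n', hn'N', rfl⟩ := hNS hn
  have hhS : h ∈ S := by
    rw [eq_mul_inv_of_mul_eq hhn]
    exact S.mul_mem g.2 (S.inv_mem n'.2)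
  refine ⟨p ⟨h, hhS⟩, ⟨⟨h, hhS⟩, hh, rfl⟩, p n', hn'N', ?_⟩
  change p ⟨h, hhS⟩ * p n' = p g
  rw [← map_mul]
  exact congrArg p (Subtype.ext hhn)

theorem QuasiProdense.map_subgroupOf {S : Subgroup Γ} {p : S →* Q}
    (hsurj : Function.Surjective p)
    (hp : ∀ N' : Subgroup Q, N'.Normal → N' ≠ ⊥ →
      ∃ N : Subgroup Γ, N.Normal ∧ N ≠ ⊥ ∧ N ≤ (N'.comap p).map S.subtype)
    {H : Subgroup Γ} (hH : QuasiProdense H) : QuasiProdense ((H.subgroupOf S).map p) := by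
  have : (pronormalClosure H).FiniteIndex := ⟨hH⟩
  have hmap : (((pronormalClosure H).subgroupOf S).map p).index ≠ 0 :=
    ne_zero_of_dvd_ne_zero Subgroup.FiniteIndex.index_ne_zero (Subgroup.index_map_dvd _ hsurj)
  exact ne_zero_of_dvd_ne_zero hmap
    (Subgroup.index_dvd_of_le (map_pronormalClosure_subgroupOf_le hp H))

end Pronormal

namespace Vtx

variable {k : ℕ}

theorem Pre.trans {a b c : Vtx A k} (hab : Pre a b) (hbc : Pre b c) : Pre a c :=
  List.IsPrefix.trans hab hbc

theorem Pre.eq_of_len_le {a b : Vtx A k} (h : Pre a b) (hl : b.len ≤ a.len) : a = b :=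
  Subtype.ext (h.eq_of_length (le_antisymm h.length_le hl))

theorem eq_of_pre_of_pre {a b c : Vtx A k} (hac : Pre a c) (hbc : Pre b c)
    (hl : a.len = b.len) : a = b :=
  Subtype.ext ((List.prefix_of_prefix_length_le hac hbc hl.le).eq_of_length hl)

theorem len_cat (v : Vtx A 0) (w : Vtx A v.len) : (cat v w).len = v.len + w.len :=
  List.length_append

theorem cat_injective (v : Vtx A 0) : Function.Injective (cat v) := fun a b h => by
  rw [← dropPre_cat v a, h, dropPre_cat]

theorem pre_cat_iff (v : Vtx A 0) {a b : Vtx A v.len} : Pre (cat v a) (cat v b) ↔ Pre a b :=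
  List.prefix_append_right_inj v.1

end Vtx

section Rist

variable {k : ℕ} {G G' : Subgroup (Equiv.Perm (Vtx A k))}

theorem pre_of_mem_rist {w t : Vtx A k} {r : Equiv.Perm (Vtx A k)} (hr : r ∈ rist G w)
    (ht : r t ≠ t) : Vtx.Pre w t :=
  not_not.1 fun h => ht (hr.2 t h)

theorem rist_anti {w w' : Vtx A k} (hw : Vtx.Pre w w') : rist G w' ≤ rist G w :=
  fun _ hr => ⟨hr.1, fun t ht => hr.2 t fun h => ht (hw.trans h)⟩

theorem apply_eq_self_of_mem_rist (hle : G ≤ treeAut A k) {w t : Vtx A k}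
    {r : Equiv.Perm (Vtx A k)} (hr : r ∈ rist G w) (ht : t.len ≤ w.len) : r t = t := by
  by_contra hrt
  have hwt : w = t := (pre_of_mem_rist hr hrt).eq_of_len_le ht
  subst hwt
  have hlen : (r w).len = w.len := (hle hr.1).1 w
  exact hrt (r.injective (hr.2 (r w) fun h => hrt (h.eq_of_len_le hlen.le).symm))

theorem conj_mem_rist {g r : Equiv.Perm (Vtx A k)} {w : Vtx A k} (hg : g ∈ treeAut A k)
    (hgG : g ∈ G) (hr : r ∈ rist G w) : g * r * g⁻¹ ∈ rist G (g w) := by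
  refine ⟨G.mul_mem (G.mul_mem hgG hr.1) (G.inv_mem hgG), fun t ht => ?_⟩
  have hgt : g (g⁻¹ t) = t := g.apply_symm_apply t
  have : ¬ Vtx.Pre w (g⁻¹ t) := fun h => ht (hgt ▸ (hg.2 w (g⁻¹ t)).2 h)
  change g (r (g⁻¹ t)) = t
  rw [hr.2 _ this, hgt]

theorem disjoint_of_mem_rist {a b : Vtx A k} (hl : a.len = b.len) (hab : a ≠ b)
    {r s : Equiv.Perm (Vtx A k)} (hr : r ∈ rist G a) (hs : s ∈ rist G' b) : r.Disjoint s :=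
  fun t => by
    by_contra! h
    exact hab (Vtx.eq_of_pre_of_pre (pre_of_mem_rist hr h.1) (pre_of_mem_rist hs h.2) hl)

theorem commute_conj_of_mem_rist {x r s : Equiv.Perm (Vtx A k)} {u : Vtx A k}
    (hx : x ∈ treeAut A k) (hu : x u ≠ u) (hr : r ∈ rist ⊤ u) (hs : s ∈ rist G u) :
    Commute (x * r * x⁻¹) s :=
  (disjoint_of_mem_rist (hx.1 u) hu (conj_mem_rist hx (Subgroup.mem_top x) hr) hs).commute

theorem IsWeaklyBranch.exists_ne_one_mem_rist (hG : IsWeaklyBranch G) (w : Vtx A k) :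
    ∃ r ∈ rist G w, r ≠ 1 := by
  obtain ⟨w₀, hw₀, hne⟩ : ∃ w₀ : Vtx A k, w₀.len = w.len ∧ rist G w₀ ≠ ⊥ := by
    by_contra! h
    exact hG.rist_nt w.len (le_bot_iff.1 (iSup₂_le fun u hu => (h u hu).le))
  obtain ⟨g, hgG, rfl⟩ := hG.trans w₀ w hw₀
  obtain ⟨⟨r, hr⟩, hr1⟩ := Subgroup.ne_bot_iff_exists_ne_one.1 hne
  refine ⟨g * r * g⁻¹, conj_mem_rist (hG.le_aut hgG) hgG hr, fun h => hr1 ?_⟩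
  exact Subtype.ext (conj_eq_one_iff.1 h)

theorem IsWeaklyBranch.exists_not_commute (hG : IsWeaklyBranch G) (w : Vtx A k) :
    ∃ r ∈ rist G w, ∃ s ∈ rist G w, ¬ Commute r s := by
  obtain ⟨r, hr, hr1⟩ := hG.exists_ne_one_mem_rist w
  obtain ⟨x, hx⟩ : ∃ x, r x ≠ x := not_forall.1 fun h => hr1 (Equiv.ext h)
  obtain ⟨s, hs, hs1⟩ := hG.exists_ne_one_mem_rist x
  refine ⟨r, hr, s, rist_anti (pre_of_mem_rist hr hx) hs, fun hrs => hs1 ?_⟩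
  -- `r` moves the subtree below `x`, so `s = r s r⁻¹` is supported on two disjoint subtrees
  have hconj : s ∈ rist G (r x) := by
    simpa [hrs.eq] using conj_mem_rist (hG.le_aut hr.1) hr.1 hs
  exact Equiv.Perm.disjoint_refl_iff.1
    (disjoint_of_mem_rist ((hG.le_aut hr.1).1 x) hx hconj hs)

end Rist

section Sections

variable {v : Vtx A 0} {f g : Equiv.Perm (Vtx A 0)}

theorem secPerm_cat (hf : f ∈ vstab (treeAut A 0) v) (w : Vtx A v.len) :
    Vtx.cat v (secPerm v f w) = f (Vtx.cat v w) := by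
  rw [secPerm_coe hf]
  exact secFun_key hf w

theorem secPerm_mul (hf : f ∈ vstab (treeAut A 0) v) (hg : g ∈ vstab (treeAut A 0) v) :
    secPerm v (f * g) = secPerm v f * secPerm v g :=
  (phiHom v).map_mul ⟨f, hf⟩ ⟨g, hg⟩

theorem secPerm_eq_one (hf : f ∈ vstab (treeAut A 0) v)
    (h : ∀ t, f (Vtx.cat v t) = Vtx.cat v t) : secPerm v f = 1 :=
  Equiv.ext fun t => Vtx.cat_injective v (by rw [secPerm_cat hf, h]; rfl)

theorem secPerm_mem_treeAut (hf : f ∈ vstab (treeAut A 0) v) :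
    secPerm v f ∈ treeAut A v.len := by
  refine ⟨fun w => ?_, fun a b => ?_⟩
  · have h := congrArg Vtx.len (secPerm_cat hf w)
    rw [Vtx.len_cat, hf.1.1, Vtx.len_cat] at h
    omega
  · rw [← Vtx.pre_cat_iff v, secPerm_cat hf, secPerm_cat hf, hf.1.2, Vtx.pre_cat_iff]

theorem secPerm_mem_rist {G : Subgroup (Equiv.Perm (Vtx A 0))} {u : Vtx A v.len}
    (hf : f ∈ vstab (treeAut A 0) v) (hfu : f ∈ rist G (Vtx.cat v u)) :
    secPerm v f ∈ rist ⊤ u :=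
  ⟨trivial, fun t ht => Vtx.cat_injective v <| by
    rw [secPerm_cat hf]
    exact hfu.2 _ fun h => ht ((Vtx.pre_cat_iff v).1 h)⟩

theorem secPerm_mem_secSub {K : Subgroup (Equiv.Perm (Vtx A 0))} (hf : f ∈ vstab K v)
    (hfA : f ∈ treeAut A 0) : secPerm v f ∈ secSub v K :=
  ⟨⟨f, hfA, hf.2⟩, hf, rfl⟩

theorem secSub_le_treeAut (K : Subgroup (Equiv.Perm (Vtx A 0))) :
    secSub v K ≤ treeAut A v.len := by
  rintro _ ⟨f, -, rfl⟩
  exact secPerm_mem_treeAut f.2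

end Sections

section SecHom

variable {G : Subgroup (Equiv.Perm (Vtx A 0))}

noncomputable def secHom (hle : G ≤ treeAut A 0) (v : Vtx A 0) :
    MulAction.stabilizer G v →* secSub v G where
  toFun g := ⟨secPerm v g, secPerm_mem_secSub ⟨g.1.2, g.2⟩ (hle g.1.2)⟩
  map_one' := Subtype.ext (phiHom v).map_one
  map_mul' a b := Subtype.ext (secPerm_mul ⟨hle a.1.2, a.2⟩ ⟨hle b.1.2, b.2⟩)

theorem secHom_surjective (hle : G ≤ treeAut A 0) (v : Vtx A 0) :
    Function.Surjective (secHom hle v) := by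
  rintro ⟨_, f, hf, rfl⟩
  exact ⟨⟨⟨f, hf.1⟩, hf.2⟩, rfl⟩

theorem IsWeaklyBranch.exists_ne_one_mem_rist_secHom_mem (hG : IsWeaklyBranch G) (v : Vtx A 0)
    {N : Subgroup (secSub v G)} (hN : N.Normal) (hbot : N ≠ ⊥) :
    ∃ c : MulAction.stabilizer G v, c ≠ 1 ∧ (c : Equiv.Perm (Vtx A 0)) ∈ rist G v ∧
      secHom hG.le_aut v c ∈ N := by
  set p := secHom hG.le_aut v
  obtain ⟨⟨x, hxN⟩, hx1⟩ := Subgroup.ne_bot_iff_exists_ne_one.1 hbot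
  obtain ⟨u, hu⟩ : ∃ u, (x : Equiv.Perm (Vtx A v.len)) u ≠ u :=
    not_forall.1 fun h => hx1 (Subtype.ext (Subtype.ext (Equiv.ext h)))
  obtain ⟨r, hr, s, hs, hrs⟩ := hG.exists_not_commute (Vtx.cat v u)
  have hlen : v.len ≤ (Vtx.cat v u).len := by rw [Vtx.len_cat]; omega
  let R : MulAction.stabilizer G v := ⟨⟨r, hr.1⟩, apply_eq_self_of_mem_rist hG.le_aut hr hlen⟩
  let S : MulAction.stabilizer G v := ⟨⟨s, hs.1⟩, apply_eq_self_of_mem_rist hG.le_aut hs hlen⟩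
  let K := (rist G (Vtx.cat v u)).comap (G.subtype.comp (MulAction.stabilizer G v).subtype)
  -- the sections of `r` and `s` live below `u`, the conjugate of the first by `x` below `x u ≠ u`
  have hcomm : ∀ F ∈ K, Commute (x * p R * x⁻¹) (p F) := fun F hF =>
    Subtype.ext (commute_conj_of_mem_rist (secSub_le_treeAut G x.2) hu
      (secPerm_mem_rist ⟨hG.le_aut hr.1, R.2⟩ hr) (secPerm_mem_rist ⟨hG.le_aut F.1.2, F.2⟩ hF)).eq
  have hRS : ⁅R⁻¹, S⁆ ∈ K := by
    rw [commutatorElement_def]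
    exact K.mul_mem (K.mul_mem (K.mul_mem (K.inv_mem hr) hs) (K.inv_mem (K.inv_mem hr)))
      (K.inv_mem hs)
  refine ⟨⁅R⁻¹, S⁆, ?_, rist_anti (Vtx.pre_cat v u) hRS, ?_⟩
  · rw [Ne, commutatorElement_eq_one_iff_commute, Commute.inv_left_iff]
    exact fun h => hrs ((h.map (MulAction.stabilizer G v).subtype).map G.subtype)
  · rw [map_commutatorElement, map_inv,
      ← commutatorElement_commutatorElement_eq (hcomm R hr) (hcomm S hs)]
    exact hN.commutatorElement_mem (hN.commutatorElement_mem hxN _) _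

theorem conj_mem_map_comap_secHom (hle : G ≤ treeAut A 0) {v : Vtx A 0}
    {N : Subgroup (secSub v G)} (hN : N.Normal) (g : G) {c : G}
    (hc : (c : Equiv.Perm (Vtx A 0)) ∈ rist G v)
    (hcN : c ∈ (N.comap (secHom hle v)).map (MulAction.stabilizer G v).subtype) :
    g * c * g⁻¹ ∈ (N.comap (secHom hle v)).map (MulAction.stabilizer G v).subtype := by
  by_cases hg : g • v = v
  · obtain ⟨c', hc', rfl⟩ := hcN
    refine ⟨_, (hN.comap (secHom hle v)).conj_mem c' hc' ⟨g, hg⟩, ?_⟩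
    simp
  -- otherwise `g c g⁻¹` lives below `g v ≠ v` on the level of `v`, so its section is trivial
  have hm : ((g * c * g⁻¹ : G) : Equiv.Perm (Vtx A 0)) ∈ rist G (g • v) :=
    conj_mem_rist (hle g.2) g.2 hc
  have hlen : (g • v).len = v.len := (hle g.2).1 v
  have hfix : g * c * g⁻¹ ∈ MulAction.stabilizer G v := apply_eq_self_of_mem_rist hle hm hlen.ge
  have hsec : secHom hle v ⟨g * c * g⁻¹, hfix⟩ = 1 :=
    Subtype.ext (secPerm_eq_one ⟨hle (g * c * g⁻¹).2, hfix⟩ fun t =>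
      hm.2 _ fun h => hg (Vtx.eq_of_pre_of_pre h (Vtx.pre_cat v t) hlen))
  exact ⟨⟨g * c * g⁻¹, hfix⟩, Subgroup.mem_comap.2 (hsec ▸ N.one_mem), rfl⟩

theorem IsWeaklyBranch.exists_normal_le_map_comap_secHom (hG : IsWeaklyBranch G) (v : Vtx A 0)
    {N : Subgroup (secSub v G)} (hN : N.Normal) (hbot : N ≠ ⊥) :
    ∃ M : Subgroup G, M.Normal ∧ M ≠ ⊥ ∧
      M ≤ (N.comap (secHom hG.le_aut v)).map (MulAction.stabilizer G v).subtype := by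
  set T := (N.comap (secHom hG.le_aut v)).map (MulAction.stabilizer G v).subtype
  obtain ⟨c, hc1, hc, hcN⟩ := hG.exists_ne_one_mem_rist_secHom_mem v hN hbot
  refine ⟨Subgroup.normalClosure {d : G | (d : Equiv.Perm (Vtx A 0)) ∈ rist G v ∧ d ∈ T},
    inferInstance, Subgroup.ne_bot_iff_exists_ne_one.2 ?_, (Subgroup.closure_le T).2 ?_⟩
  · exact ⟨⟨c, Subgroup.subset_normalClosure ⟨hc, c, hcN, rfl⟩⟩,
      fun h => hc1 (OneMemClass.coe_eq_one.1 (congrArg Subtype.val h))⟩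
  · intro _ hx
    obtain ⟨d, ⟨hd, hdT⟩, hconj⟩ := Group.mem_conjugatesOfSet_iff.1 hx
    obtain ⟨g, rfl⟩ := isConj_iff.1 hconj
    exact conj_mem_map_comap_secHom hG.le_aut hN g hd hdT

theorem map_subgroupOf_secHom_le (hle : G ≤ treeAut A 0)
    (H : Subgroup (Equiv.Perm (Vtx A 0))) (v : Vtx A 0) :
    ((H.subgroupOf G).subgroupOf (MulAction.stabilizer G v)).map (secHom hle v) ≤
      (secSub v H).subgroupOf (secSub v G) := by
  rintro _ ⟨g, hg, rfl⟩
  exact secPerm_mem_secSub ⟨hg, g.2⟩ (hle g.1.2)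

end SecHom

theorem section_quasiProdense_general
    (A : ℕ → Type*)
    (G H : Subgroup (Equiv.Perm (Vtx A 0))) (hG : IsWeaklyBranch G)
    (hqp : QuasiProdense (H.subgroupOf G)) (v : Vtx A 0) :
    QuasiProdense ((secSub v H).subgroupOf (secSub v G)) := by
  have hqp_stab := hqp.map_subgroupOf (secHom_surjective hG.le_aut v)
    fun _ hN hbot => hG.exists_normal_le_map_comap_secHom v hN hbot
  exact hqp_stab.mono (map_subgroupOf_secHom_le hG.le_aut H v)

/-- Sections of quasi-prodense subgroups of weakly branch groups are quasi-prodense: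
if `H` is quasi-prodense in the weakly branch group `G`, then `H_v = φ_v(St_H(v))` is
quasi-prodense in `G_v = φ_v(St_G(v))` for every vertex `v`. -/
theorem section_quasiProdense
    (A : ℕ → Type*) [∀ i, Fintype (A i)] (hA : ∀ i, 2 ≤ Fintype.card (A i))
    (G H : Subgroup (Equiv.Perm (Vtx A 0))) (hG : IsWeaklyBranch G)
    (hHG : H ≤ G) (hqp : QuasiProdense (H.subgroupOf G)) (v : Vtx A 0) :
    QuasiProdense ((secSub v H).subgroupOf (secSub v G)) :=
  section_quasiProdense_general A G H hG hqp v
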